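/- arXiv:2202.10606 — 2 statements merged into one kernel-verified Lean document; each statement's English description precedes it below -/
import Mathlib

section
/- Let n ≥ 1 and let Π = {π_v : v ∈ [0,H]^n} be the class of binary classifiers on [n] × [0,H] defined by π_v(i, p) = 1 if v[i] ≥ p and 0 otherwise. Then the VC dimension of Π is exactly n. -/
open Finset

/-- A finite set of (index, price) points is shattered by the threshold policy
class `π_v (i, p) = 1[v i ≥ p]` with `v ∈ [0,H]^n`. -/
def ShattersThresholds (n : ℕ) (H : ℝ) (S : Finset (Fin n × ℝ)) : Prop :=
  ∀ T ⊆ S, ∃ v : Fin n → ℝ, (∀ i, v i ∈ Set.Icc 0 H) ∧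
    ∀ z ∈ S, (z.2 ≤ v z.1 ↔ z ∈ T)

/-- The VC dimension of `Π = {π_v : v ∈ [0,H]^n}` on `[n] × [0,H]`
is exactly `n`: some set of `n` valid points is shattered, and no set of
`n + 1` valid points is shattered. -/
theorem stmt1 (n : ℕ) (hn : 1 ≤ n) (H : ℝ) (hH : 0 < H) :
    (∃ S : Finset (Fin n × ℝ), (∀ z ∈ S, z.2 ∈ Set.Icc 0 H) ∧
      S.card = n ∧ ShattersThresholds n H S) ∧
    (∀ S : Finset (Fin n × ℝ), (∀ z ∈ S, z.2 ∈ Set.Icc 0 H) →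
      S.card = n + 1 → ¬ ShattersThresholds n H S) := by
  constructor
  · refine ⟨Finset.univ.image (fun i => (i, H)), ?_, ?_, ?_⟩
    · intro z hz
      simp only [mem_image] at hz
      obtain ⟨i, _, rfl⟩ := hz
      exact ⟨hH.le, le_refl H⟩
    · rw [Finset.card_image_of_injective _ (fun a b h => (Prod.mk.injEq _ _ _ _ ▸ h).1)]
      simp
    · intro T hT
      refine ⟨fun i => if (i, H) ∈ T then H else 0, ?_, ?_⟩
      · intro i
        by_cases h : (i, H) ∈ T <;> simp [h, hH.le, le_refl]
      · intro z hz
        simp only [mem_image] at hz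
        obtain ⟨i, _, rfl⟩ := hz
        by_cases h : (i, H) ∈ T <;> simp [h]
        linarith
  · intro S hS hcard hsh
    have key : ∀ a ∈ S, ∀ b ∈ S, a.1 = b.1 → a.2 < b.2 → False := by
      intro a ha b hb hfst hlt
      obtain ⟨v, _, hv⟩ := hsh {b} (by simpa using hb)
      have h1 : b.2 ≤ v b.1 := (hv b hb).mpr (mem_singleton_self b)
      have h2 : a ∈ ({b} : Finset (Fin n × ℝ)) :=
        (hv a ha).mp (by rw [hfst]; linarith)
      have := mem_singleton.mp h2
      rw [this] at hlt
      exact lt_irrefl _ hlt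
    have : ∃ x ∈ S, ∃ y ∈ S, x ≠ y ∧ x.1 = y.1 :=
      Finset.exists_ne_map_eq_of_card_lt_of_maps_to
        (by simp [hcard]) (fun x _ => mem_univ x.1)
    obtain ⟨x, hx, y, hy, hne, hfst⟩ := this
    have hsnd : x.2 ≠ y.2 := fun h => hne (Prod.ext hfst h)
    rcases lt_or_gt_of_ne hsnd with h | h
    · exact key x hx y hy hfst h
    · exact key y hy x hx hfst.symm h
end

section
/- Let v, η, v̂, η̂, H, α, β be nonnegative reals with v/η ≤ H, β ≤ η, 0 ≤ α ≤ 1/3, and suppose ((1−α)v − Hαβ)/(1+α) ≤ v̂ ≤ ((1+α)v + Hαβ)/(1−α) and (1−2α)η ≤ η̂ ≤ (1+2α)η with η > 0. Then η̂ > 0 and |v/η − v̂/η̂| ≤ 25Hα. -/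
/-- deterministic core of the ratio-estimator error bound:
given Bernstein-type bounds on `v̂` and Chernoff-type bounds on `η̂`,
the ratio `v̂/η̂` is within `25 H α` of `v/η`. -/
theorem stmt6 (v η vh ηh H α β : ℝ)
    (hv : 0 ≤ v) (hη : 0 < η) (hvh : 0 ≤ vh) (hηh0 : 0 ≤ ηh) (hH : 0 ≤ H)
    (hratio : v / η ≤ H) (hβ0 : 0 ≤ β) (hβη : β ≤ η)
    (hα0 : 0 ≤ α) (hα : α ≤ 1 / 3)
    (h1 : ((1 - α) * v - H * α * β) / (1 + α) ≤ vh)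
    (h2 : vh ≤ ((1 + α) * v + H * α * β) / (1 - α))
    (h3 : (1 - 2 * α) * η ≤ ηh) (h4 : ηh ≤ (1 + 2 * α) * η) :
    0 < ηh ∧ |v / η - vh / ηh| ≤ 25 * H * α := by
  have hp1 : (0:ℝ) < 1 + α := by linarith
  have hp2 : (0:ℝ) < 1 - α := by linarith
  have hηh : 0 < ηh := lt_of_lt_of_le (by nlinarith) h3
  have hvHη : v ≤ H * η := (div_le_iff₀ hη).mp hratio
  have h1' : (1 - α) * v - H * α * β ≤ vh * (1 + α) := (div_le_iff₀ hp1).mp h1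
  have h2' : vh * (1 - α) ≤ (1 + α) * v + H * α * β := (le_div_iff₀ hp2).mp h2
  have hβH : H * α * β ≤ H * α * η := by
    have := mul_le_mul_of_nonneg_left hβη (mul_nonneg hH hα0)
    linarith [this]
  have h1'' : (1 - α) * v - H * α * η ≤ vh * (1 + α) := by linarith
  have h2'' : vh * (1 - α) ≤ (1 + α) * v + H * α * η := by linarith
  have hαq : 0 ≤ α * (1/3 - α) := mul_nonneg hα0 (by linarith)
  have hvη : v * η ≤ H * η * η := mul_le_mul_of_nonneg_right hvHη hη.le
  refine ⟨hηh, ?_⟩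
  rw [abs_sub_le_iff]
  constructor
  · -- v/η - vh/ηh ≤ 25Hα
    rw [div_sub_div _ _ hη.ne' hηh.ne', div_le_iff₀ (by positivity)]
    have e1 : η * ((1 - α) * v - H * α * η) ≤ η * (vh * (1 + α)) :=
      mul_le_mul_of_nonneg_left h1'' hη.le
    have e2 : v * ηh ≤ v * ((1 + 2*α) * η) := mul_le_mul_of_nonneg_left h4 hv
    have e2' : (1 + α) * (v * ηh) ≤ (1 + α) * (v * ((1 + 2*α) * η)) :=
      mul_le_mul_of_nonneg_left e2 hp1.le
    have e4 : (4*α + 2*α^2) * (v * η) ≤ (4*α + 2*α^2) * (H * η * η) :=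
      mul_le_mul_of_nonneg_left hvη (by positivity)
    have hq : (5 + 2*α) ≤ 25 * (1 - 2*α) * (1 + α) := by nlinarith [hαq, sq_nonneg (1/3 - α)]
    have e5 : (5 + 2*α) * (H * α * (η * η)) ≤ (1 + α) * (25 * H * α * (η * ηh)) := by
      calc (5 + 2*α) * (H * α * (η * η)) ≤ (25 * (1 - 2*α) * (1 + α)) * (H * α * (η * η)) :=
            mul_le_mul_of_nonneg_right hq (by positivity)
        _ = (25 * H * α * ((1 + α) * η)) * ((1 - 2*α) * η) := by ring
        _ ≤ (25 * H * α * ((1 + α) * η)) * ηh :=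
            mul_le_mul_of_nonneg_left h3 (by positivity)
        _ = (1 + α) * (25 * H * α * (η * ηh)) := by ring
    have key : (1 + α) * (v * ηh - η * vh) ≤ (1 + α) * (25 * H * α * (η * ηh)) := by
      linarith [e1, e2', e4, e5]
    have := le_of_mul_le_mul_left key hp1
    linarith
  · -- vh/ηh - v/η ≤ 25Hα
    rw [div_sub_div _ _ hηh.ne' hη.ne', div_le_iff₀ (by positivity)]
    have e1 : η * (vh * (1 - α)) ≤ η * ((1 + α) * v + H * α * η) :=
      mul_le_mul_of_nonneg_left h2'' hη.le
    have e2 : v * ((1 - 2*α) * η) ≤ v * ηh := mul_le_mul_of_nonneg_left h3 hv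
    have e2' : (1 - α) * (v * ((1 - 2*α) * η)) ≤ (1 - α) * (v * ηh) :=
      mul_le_mul_of_nonneg_left e2 hp2.le
    have e4 : (4*α - 2*α^2) * (v * η) ≤ (4*α - 2*α^2) * (H * η * η) :=
      mul_le_mul_of_nonneg_left hvη (by linarith [hαq])
    have hq : (5 - 2*α) ≤ 25 * (1 - 2*α) * (1 - α) := by nlinarith [sq_nonneg (1/3 - α)]
    have e5 : (5 - 2*α) * (H * α * (η * η)) ≤ (1 - α) * (25 * H * α * (ηh * η)) := by
      calc (5 - 2*α) * (H * α * (η * η)) ≤ (25 * (1 - 2*α) * (1 - α)) * (H * α * (η * η)) :=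
            mul_le_mul_of_nonneg_right hq (by positivity)
        _ = (25 * H * α * ((1 - α) * η)) * ((1 - 2*α) * η) := by ring
        _ ≤ (25 * H * α * ((1 - α) * η)) * ηh :=
            mul_le_mul_of_nonneg_left h3 (by positivity)
        _ = (1 - α) * (25 * H * α * (ηh * η)) := by ring
    have key : (1 - α) * (vh * η - ηh * v) ≤ (1 - α) * (25 * H * α * (ηh * η)) := by
      linarith [e1, e2', e4, e5]
    have := le_of_mul_le_mul_left key hp2
    linarith
end
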